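/- For every D > 0 there exist δ₀ < ∞ and C < ∞ such that: for every δ > 0 the function E_δ(a) := τ(a) + (δ−a)²/(2D) attains its minimum over a ∈ [0, ∞), and for every δ ≥ δ₀ every minimizer a*(δ) satisfies 0 ≤ δ − a*(δ) ≤ C; in particular limsup_{δ→∞} (δ − a*(δ)) < ∞. -/

import Mathlib

/-!
The minimal surface tension `τ` is nondecreasing, and `τ(a + w) ≤ τ(a) + 8`: one more layer on
a stack adds at least `w` to its area and at most `8` to its tension. So a minimizer `a` of `E_δ`
satisfies `a ≤ δ` (otherwise `E_δ(δ) < E_δ(a)`), and `E_δ(a) ≤ E_δ(a + w)` gives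
`w(δ - a) ≤ 8D + w²/2`. A minimizer exists because only stacks with at most `2δ/w + 1` layers can
beat `a = 0`, and their `(area, tension)` points form a compact set.
-/

/-- The set of surface-tension values available at area `a`: values `τ²_ℓ(a)` of type-2
stacks (`ℓ ≥ 1`, `ℓw ≤ a ≤ 4ℓ`) together with values `τ¹_ℓ(a)` of type-1 stacks
(`ℓ ≥ 1`, radius `r ∈ [0,1]` solving `(ℓ−1)(4−(4−w)r²) + w·r² = a`, and `a` in the
admissible type-1 range). -/
def tauVals (w : ℝ) (a : ℝ) : Set ℝ :=
  {t | ∃ ℓ : ℕ, 1 ≤ ℓ ∧ (ℓ : ℝ) * w ≤ a ∧ a ≤ 4 * (ℓ : ℝ) ∧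
        t = 8 * (ℓ : ℝ) - 2 * Real.sqrt ((4 * (ℓ : ℝ) - a) * ((4 - w) * (ℓ : ℝ)))} ∪
  {t | ∃ ℓ : ℕ, 1 ≤ ℓ ∧ ∃ r : ℝ, r ∈ Set.Icc (0 : ℝ) 1 ∧
        ((ℓ : ℝ) - 1) * (4 - (4 - w) * r ^ 2) + w * r ^ 2 = a ∧
        (((ℓ : ℝ) < 4 / (4 - w) ∧ 4 * ((ℓ : ℝ) - 1) ≤ a ∧ a ≤ (ℓ : ℝ) * w) ∨
         (4 / (4 - w) < (ℓ : ℝ) ∧ (ℓ : ℝ) * w ≤ a ∧ a ≤ 4 * ((ℓ : ℝ) - 1))) ∧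
        t = ((ℓ : ℝ) - 1) * (8 - 2 * r * (4 - w)) + 2 * r * w}

/-- The minimal surface tension `τ(a)`: `τ(0) = 0` and, for `a > 0`, the infimum of the
available type-1 and type-2 surface tensions at area `a`. -/
noncomputable def tauMin (w : ℝ) (a : ℝ) : ℝ :=
  if a = 0 then 0 else sInf (tauVals w a)

open Set

variable {w : ℝ}

noncomputable def tau2 (w : ℝ) (ℓ : ℕ) (a : ℝ) : ℝ :=
  8 * ℓ - 2 * √((4 * ℓ - a) * ((4 - w) * ℓ))

def area1 (w : ℝ) (ℓ : ℕ) (r : ℝ) : ℝ :=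
  (ℓ - 1) * (4 - (4 - w) * r ^ 2) + w * r ^ 2

def tau1 (w : ℝ) (ℓ : ℕ) (r : ℝ) : ℝ :=
  (ℓ - 1) * (8 - 2 * r * (4 - w)) + 2 * r * w

/-- The points `(area, surface tension)` of all stacks of `ℓ` layers; the type-1 stacks are
parametrized by the radius of their Wulff shape. -/
noncomputable def stackGraph (w : ℝ) (ℓ : ℕ) : Set (ℝ × ℝ) :=
  (fun a => (a, tau2 w ℓ a)) '' Icc (ℓ * w) (4 * ℓ) ∪
    (fun r => (area1 w ℓ r, tau1 w ℓ r)) '' Icc 0 1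

lemma tau2_monotone (hw4 : w ≤ 4) (ℓ : ℕ) : Monotone (tau2 w ℓ) := by
  intro a b hab
  have : 0 ≤ (4 - w) * ℓ := by positivity
  unfold tau2
  gcongr

lemma tau2_mul_self (hw4 : w ≤ 4) (ℓ : ℕ) : tau2 w ℓ (ℓ * w) = 2 * (ℓ * w) := by
  have : 0 ≤ (4 - w) * ℓ := by positivity
  rw [tau2, show (4 * ℓ - ℓ * w) * ((4 - w) * ℓ) = ((4 - w) * ℓ) ^ 2 by ring,
    Real.sqrt_sq this]
  ring

lemma tau2_le_two_mul {ℓ : ℕ} {a : ℝ} (ha : ℓ * w ≤ a) : tau2 w ℓ a ≤ 2 * a := by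
  have hsq : 4 * ℓ - a ≤ √((4 * ℓ - a) * ((4 - w) * ℓ)) := by
    rcases le_total (4 * ℓ - a) 0 with h | h
    · exact h.trans (Real.sqrt_nonneg _)
    · exact (le_abs_self _).trans (Real.abs_le_sqrt (by nlinarith))
  unfold tau2
  linarith

/-- Writing `Δ = 4 - ℓ(4 - w)`, whose sign is that of `ℓ* - ℓ`, area and tension of a type-1 stack
are `4(ℓ-1) + Δr²` and `8(ℓ-1) + 2Δr`. -/
lemma area1_eq (w : ℝ) (ℓ : ℕ) (r : ℝ) :
    area1 w ℓ r = 4 * (ℓ - 1) + (4 - ℓ * (4 - w)) * r ^ 2 := by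
  unfold area1; ring

lemma tau1_eq (w : ℝ) (ℓ : ℕ) (r : ℝ) : tau1 w ℓ r = 8 * (ℓ - 1) + 2 * (4 - ℓ * (4 - w)) * r := by
  unfold tau1; ring

lemma area1_zero (w : ℝ) (ℓ : ℕ) : area1 w ℓ 0 = 4 * (ℓ - 1) := by
  simp only [area1]; ring

lemma area1_one (w : ℝ) (ℓ : ℕ) : area1 w ℓ 1 = ℓ * w := by
  simp only [area1]; ring

lemma tau1_zero (w : ℝ) (ℓ : ℕ) : tau1 w ℓ 0 = 8 * (ℓ - 1) := by
  simp only [tau1]; ring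

lemma tau1_one (w : ℝ) (ℓ : ℕ) : tau1 w ℓ 1 = 2 * (ℓ * w) := by
  simp only [tau1]; ring

lemma tau1_le_tau1 {ℓ : ℕ} {r r' : ℝ} (hr' : 0 ≤ r') (hr : 0 ≤ r)
    (h : area1 w ℓ r' ≤ area1 w ℓ r) : tau1 w ℓ r' ≤ tau1 w ℓ r := by
  rw [area1_eq, area1_eq] at h
  rw [tau1_eq, tau1_eq]
  by_contra! hc
  have hpos : 0 < r' + r := by
    by_contra! h0
    obtain rfl : r = 0 := by linarith
    obtain rfl : r' = 0 := by linarith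
    simp at hc
  nlinarith [mul_pos hpos (sub_pos.2 hc)]

lemma exists_area1_eq {ℓ : ℕ} {r₁ r₂ a : ℝ} (hr₁ : r₁ ∈ Icc (0 : ℝ) 1) (hr₂ : r₂ ∈ Icc (0 : ℝ) 1)
    (ha : a ∈ uIcc (area1 w ℓ r₁) (area1 w ℓ r₂)) : ∃ r ∈ Icc (0 : ℝ) 1, area1 w ℓ r = a := by
  have hcont : Continuous (area1 w ℓ) := by unfold area1; fun_prop
  obtain ⟨r, hr, rfl⟩ := intermediate_value_uIcc hcont.continuousOn ha
  exact ⟨r, uIcc_subset_Icc hr₁ hr₂ hr, rfl⟩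

lemma isCompact_stackGraph (w : ℝ) (ℓ : ℕ) : IsCompact (stackGraph w ℓ) := by
  have h2 : Continuous fun a => (a, tau2 w ℓ a) := by unfold tau2; fun_prop
  have h1 : Continuous fun r => (area1 w ℓ r, tau1 w ℓ r) := by unfold area1 tau1; fun_prop
  exact (isCompact_Icc.image h2).union (isCompact_Icc.image h1)

lemma mul_le_of_mem_stackGraph (hw0 : 0 ≤ w) (hw4 : w ≤ 4) {ℓ : ℕ} (hℓ : 1 ≤ ℓ) {p : ℝ × ℝ}
    (hp : p ∈ stackGraph w ℓ) : (ℓ - 1) * w ≤ p.1 := by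
  have hℓ' : (0 : ℝ) ≤ ℓ - 1 := by rw [sub_nonneg]; exact_mod_cast hℓ
  rcases hp with ⟨a, ⟨ha, -⟩, rfl⟩ | ⟨r, ⟨hr0, hr1⟩, rfl⟩
  · dsimp only
    linarith
  · have : w ≤ 4 - (4 - w) * r ^ 2 := by
      nlinarith [mul_nonneg (sub_nonneg.2 hw4) (sub_nonneg.2 (pow_le_one₀ (n := 2) hr0 hr1))]
    dsimp only [area1]
    nlinarith [mul_le_mul_of_nonneg_left this hℓ', mul_nonneg hw0 (sq_nonneg r)]

lemma le_ceil_div_add_one_of_mem_stackGraph (hw0 : 0 < w) (hw4 : w ≤ 4) {ℓ : ℕ} (hℓ : 1 ≤ ℓ)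
    {p : ℝ × ℝ} (hp : p ∈ stackGraph w ℓ) : ℓ ≤ ⌈p.1 / w⌉₊ + 1 := by
  have h : (ℓ : ℝ) - 1 ≤ p.1 / w :=
    (le_div_iff₀ hw0).2 (mul_le_of_mem_stackGraph hw0.le hw4 hℓ hp)
  have : (ℓ : ℝ) ≤ ⌈p.1 / w⌉₊ + 1 := by linarith [Nat.le_ceil (p.1 / w)]
  exact_mod_cast this

lemma nonneg_of_mem_stackGraph (hw0 : 0 < w) (hw4 : w ≤ 4) {ℓ : ℕ} (hℓ : 1 ≤ ℓ) {p : ℝ × ℝ}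
    (hp : p ∈ stackGraph w ℓ) : 0 ≤ p.2 := by
  have hℓ' : (1 : ℝ) ≤ ℓ := by exact_mod_cast hℓ
  rcases hp with ⟨a, ⟨ha, -⟩, rfl⟩ | ⟨r, ⟨hr0, hr1⟩, rfl⟩
  · have : 0 ≤ 2 * (ℓ * w) := by positivity
    exact this.trans ((tau2_mul_self hw4 ℓ).symm.le.trans (tau2_monotone hw4 ℓ ha))
  · have : 0 ≤ 8 - 2 * r * (4 - w) := by nlinarith
    dsimp only [tau1]
    nlinarith

/-- The non-degeneracy `ℓ* ∉ ℕ` makes every type-1 stack admissible. -/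
lemma area1_admissible (hw4 : w < 4) (hnd : ∀ n : ℕ, (n : ℝ) ≠ 4 / (4 - w)) (ℓ : ℕ)
    {r : ℝ} (hr : r ∈ Icc (0 : ℝ) 1) :
    ((ℓ : ℝ) < 4 / (4 - w) ∧ 4 * ((ℓ : ℝ) - 1) ≤ area1 w ℓ r ∧ area1 w ℓ r ≤ ℓ * w) ∨
      (4 / (4 - w) < (ℓ : ℝ) ∧ ℓ * w ≤ area1 w ℓ r ∧ area1 w ℓ r ≤ 4 * ((ℓ : ℝ) - 1)) := by
  obtain ⟨hr0, hr1⟩ := hr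
  have hr2 : r ^ 2 ≤ 1 := pow_le_one₀ hr0 hr1
  have h4w : 0 < 4 - w := by linarith
  rw [area1_eq]
  rcases (hnd ℓ).lt_or_gt with h | h
  · have hΔ : 0 < 4 - ℓ * (4 - w) := by rw [lt_div_iff₀ h4w] at h; linarith
    left
    exact ⟨h, by nlinarith, by nlinarith⟩
  · have hΔ : 4 - ℓ * (4 - w) < 0 := by rw [div_lt_iff₀ h4w] at h; linarith
    right
    exact ⟨h, by nlinarith, by nlinarith⟩

lemma exists_mem_stackGraph_of_mem_tauVals {a t : ℝ} (ht : t ∈ tauVals w a) :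
    ∃ ℓ, 1 ≤ ℓ ∧ (a, t) ∈ stackGraph w ℓ := by
  rcases ht with ⟨ℓ, hℓ, h1, h2, rfl⟩ | ⟨ℓ, hℓ, r, hr, rfl, -, rfl⟩
  · exact ⟨ℓ, hℓ, Or.inl ⟨a, ⟨h1, h2⟩, rfl⟩⟩
  · exact ⟨ℓ, hℓ, Or.inr ⟨r, hr, rfl⟩⟩

lemma mem_tauVals_of_mem_stackGraph (hw4 : w < 4) (hnd : ∀ n : ℕ, (n : ℝ) ≠ 4 / (4 - w))
    {ℓ : ℕ} (hℓ : 1 ≤ ℓ) {a t : ℝ} (h : (a, t) ∈ stackGraph w ℓ) : t ∈ tauVals w a := by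
  rcases h with ⟨a, ha, h⟩ | ⟨r, hr, h⟩ <;> obtain ⟨rfl, rfl⟩ := Prod.mk.inj h
  · exact Or.inl ⟨ℓ, hℓ, ha.1, ha.2, rfl⟩
  · exact Or.inr ⟨ℓ, hℓ, r, hr, rfl, area1_admissible hw4 hnd ℓ hr, rfl⟩

lemma tauMin_zero (w : ℝ) : tauMin w 0 = 0 := if_pos rfl

lemma tauVals_nonneg (hw0 : 0 < w) (hw4 : w ≤ 4) {a t : ℝ} (ht : t ∈ tauVals w a) : 0 ≤ t := by
  obtain ⟨ℓ, hℓ, h⟩ := exists_mem_stackGraph_of_mem_tauVals ht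
  exact nonneg_of_mem_stackGraph hw0 hw4 hℓ h

lemma tauMin_nonneg (hw0 : 0 < w) (hw4 : w ≤ 4) (a : ℝ) : 0 ≤ tauMin w a := by
  unfold tauMin
  split_ifs
  exacts [le_rfl, Real.sInf_nonneg fun _ => tauVals_nonneg hw0 hw4]

lemma tauMin_le (hw0 : 0 < w) (hw4 : w ≤ 4) {a t : ℝ} (ha : 0 ≤ a) (ht : t ∈ tauVals w a) :
    tauMin w a ≤ t := by
  rcases ha.eq_or_lt with rfl | ha
  · rw [tauMin_zero]
    exact tauVals_nonneg hw0 hw4 ht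
  · rw [tauMin, if_neg ha.ne']
    exact csInf_le ⟨0, fun _ => tauVals_nonneg hw0 hw4⟩ ht

/-- A stack of `⌈a/4⌉` layers has area `a`, and tension at most `2a` (type 2) or `2⌈a/4⌉w`
(type 1). -/
lemma exists_mem_tauVals_le (hw0 : 0 < w) (hw4 : w < 4) (hnd : ∀ n : ℕ, (n : ℝ) ≠ 4 / (4 - w))
    {a : ℝ} (ha : 0 < a) {k : ℕ} (hk : a ≤ 4 * k) : ∃ t ∈ tauVals w a, t ≤ 2 * max a (k * w) := by
  set m := ⌈a / 4⌉₊
  have hm : 1 ≤ m := Nat.one_le_iff_ne_zero.2 (Nat.ceil_pos.2 (by positivity)).ne'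
  have hmk : (m : ℝ) ≤ k := by exact_mod_cast Nat.ceil_le.2 (by linarith)
  have ham : a ≤ 4 * m := by linarith [Nat.le_ceil (a / 4)]
  have ham' : 4 * ((m : ℝ) - 1) ≤ a := by linarith [Nat.ceil_lt_add_one (by positivity : 0 ≤ a / 4)]
  have hmax : 2 * (m * w) ≤ 2 * max a (k * w) := by gcongr; exact le_max_of_le_right (by gcongr)
  by_cases h : m * w ≤ a
  · refine ⟨_, mem_tauVals_of_mem_stackGraph hw4 hnd hm (Or.inl ⟨a, ⟨h, ham⟩, rfl⟩), ?_⟩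
    exact (tau2_le_two_mul h).trans (by gcongr; exact le_max_left _ _)
  · have hhi : a ≤ area1 w m 1 := by rw [area1_one]; exact (not_le.1 h).le
    obtain ⟨r, hr, hra⟩ := exists_area1_eq (left_mem_Icc.2 zero_le_one)
      (right_mem_Icc.2 zero_le_one) (mem_uIcc_of_le (by rwa [area1_zero]) hhi)
    refine ⟨_, mem_tauVals_of_mem_stackGraph hw4 hnd hm (Or.inr ⟨r, hr, congrArg₂ _ hra rfl⟩), ?_⟩
    calc tau1 w m r ≤ tau1 w m 1 := tau1_le_tau1 hr.1 zero_le_one (hra ▸ hhi)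
      _ = 2 * (m * w) := tau1_one w m
      _ ≤ 2 * max a (k * w) := hmax

lemma le_tauMin (hw0 : 0 < w) (hw4 : w < 4) (hnd : ∀ n : ℕ, (n : ℝ) ≠ 4 / (4 - w)) {a c : ℝ}
    (ha : 0 < a) (h : ∀ t ∈ tauVals w a, c ≤ t) : c ≤ tauMin w a := by
  obtain ⟨t, ht, -⟩ := exists_mem_tauVals_le hw0 hw4 hnd ha (k := ⌈a / 4⌉₊)
    (by linarith [Nat.le_ceil (a / 4)])
  rw [tauMin, if_neg ha.ne']
  exact le_csInf ⟨t, ht⟩ h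

lemma exists_mem_tauVals_le_tau2 (hw0 : 0 < w) (hw4 : w < 4)
    (hnd : ∀ n : ℕ, (n : ℝ) ≠ 4 / (4 - w)) {ℓ : ℕ} (hℓ : 1 ≤ ℓ) {a a' : ℝ}
    (ha : a ∈ Icc (ℓ * w) (4 * ℓ)) (ha' : 0 < a') (h : a' ≤ a) :
    ∃ t ∈ tauVals w a', t ≤ tau2 w ℓ a := by
  by_cases hℓa : ℓ * w ≤ a'
  · exact ⟨_, mem_tauVals_of_mem_stackGraph hw4 hnd hℓ (Or.inl ⟨a', ⟨hℓa, h.trans ha.2⟩, rfl⟩),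
      tau2_monotone hw4.le ℓ h⟩
  · have hℓw : ℓ * w ≤ 4 * ℓ := ha.1.trans ha.2
    obtain ⟨t, ht, hle⟩ := exists_mem_tauVals_le hw0 hw4 hnd ha' (k := ℓ) (by linarith)
    refine ⟨t, ht, hle.trans ?_⟩
    calc 2 * max a' (ℓ * w) = tau2 w ℓ (ℓ * w) := by
          rw [max_eq_right (not_le.1 hℓa).le, tau2_mul_self hw4.le]
      _ ≤ tau2 w ℓ a := tau2_monotone hw4.le ℓ ha.1

lemma exists_mem_tauVals_le_tau1 (hw0 : 0 < w) (hw4 : w < 4)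
    (hnd : ∀ n : ℕ, (n : ℝ) ≠ 4 / (4 - w)) {ℓ : ℕ} (hℓ : 1 ≤ ℓ) {r a' : ℝ}
    (hr : r ∈ Icc (0 : ℝ) 1) (ha' : 0 < a') (h : a' ≤ area1 w ℓ r) :
    ∃ t ∈ tauVals w a', t ≤ tau1 w ℓ r := by
  by_cases hlow : a' < area1 w ℓ 0 ∧ a' < area1 w ℓ 1
  · rw [area1_zero, area1_one] at hlow
    obtain ⟨t, ht, hle⟩ := exists_mem_tauVals_le hw0 hw4 hnd ha' (k := ℓ - 1)
      (by rw [Nat.cast_pred hℓ]; linarith)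
    refine ⟨t, ht, hle.trans ?_⟩
    rw [Nat.cast_pred hℓ]
    set M := 2 * max a' ((ℓ - 1) * w)
    have hℓ' : (1 : ℝ) ≤ ℓ := by exact_mod_cast hℓ
    have h0 : M ≤ tau1 w ℓ 0 := by
      rw [tau1_zero, show 8 * ((ℓ : ℝ) - 1) = 2 * (4 * (ℓ - 1)) by ring]
      exact mul_le_mul_of_nonneg_left (max_le hlow.1.le (by nlinarith)) zero_le_two
    have h1 : M ≤ tau1 w ℓ 1 := by
      rw [tau1_one]
      exact mul_le_mul_of_nonneg_left (max_le hlow.2.le (by nlinarith)) zero_le_two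
    calc M = (1 - r) * M + r * M := by ring
      _ ≤ (1 - r) * tau1 w ℓ 0 + r * tau1 w ℓ 1 := by
          have := sub_nonneg.2 hr.2
          have := hr.1
          gcongr
      _ = tau1 w ℓ r := by simp only [tau1]; ring
  · obtain ⟨e, he, hea'⟩ : ∃ e ∈ Icc (0 : ℝ) 1, area1 w ℓ e ≤ a' := by
      rw [not_and_or, not_lt, not_lt] at hlow
      exact hlow.elim (fun h => ⟨0, left_mem_Icc.2 zero_le_one, h⟩)
        (fun h => ⟨1, right_mem_Icc.2 zero_le_one, h⟩)
    obtain ⟨r', hr', hra⟩ := exists_area1_eq he hr (mem_uIcc_of_le hea' h)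
    exact ⟨_, mem_tauVals_of_mem_stackGraph hw4 hnd hℓ (Or.inr ⟨r', hr', congrArg₂ _ hra rfl⟩),
      tau1_le_tau1 hr'.1 hr.1 (hra ▸ h)⟩

/-- Along each branch of `stackGraph` the tension is a nondecreasing function of the area, and the
lowest point of the branch lies on the line `t = 2a`; below it `exists_mem_tauVals_le` applies. -/
lemma exists_mem_tauVals_le_of_le (hw0 : 0 < w) (hw4 : w < 4)
    (hnd : ∀ n : ℕ, (n : ℝ) ≠ 4 / (4 - w)) {a a' t : ℝ} (ht : t ∈ tauVals w a) (ha' : 0 < a')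
    (h : a' ≤ a) : ∃ t' ∈ tauVals w a', t' ≤ t := by
  obtain ⟨ℓ, hℓ, hat⟩ := exists_mem_stackGraph_of_mem_tauVals ht
  rcases hat with ⟨b, hb, hbt⟩ | ⟨r, hr, hrt⟩
  · obtain ⟨rfl, rfl⟩ := Prod.mk.inj hbt
    exact exists_mem_tauVals_le_tau2 hw0 hw4 hnd hℓ hb ha' h
  · obtain ⟨rfl, rfl⟩ := Prod.mk.inj hrt
    exact exists_mem_tauVals_le_tau1 hw0 hw4 hnd hℓ hr ha' h

lemma tauMin_monotoneOn (hw0 : 0 < w) (hw4 : w < 4) (hnd : ∀ n : ℕ, (n : ℝ) ≠ 4 / (4 - w)) :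
    MonotoneOn (tauMin w) (Ici 0) := by
  intro a' ha' a _ h
  rcases (show (0 : ℝ) ≤ a' from ha').eq_or_lt with rfl | ha'
  · rw [tauMin_zero]
    exact tauMin_nonneg hw0 hw4.le a
  · refine le_tauMin hw0 hw4 hnd (ha'.trans_le h) fun t ht => ?_
    obtain ⟨t', ht', hle⟩ := exists_mem_tauVals_le_of_le hw0 hw4 hnd ht ha' h
    exact (tauMin_le hw0 hw4.le ha'.le ht').trans hle

/-- One more layer: a full plaquette on a type-2 stack, or the same radius on a type-1 stack. -/
lemma exists_mem_stackGraph_succ (hw4 : w ≤ 4) {ℓ : ℕ} {p : ℝ × ℝ} (hp : p ∈ stackGraph w ℓ) :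
    ∃ q ∈ stackGraph w (ℓ + 1), p.1 + w ≤ q.1 ∧ q.2 ≤ p.2 + 8 := by
  rcases hp with ⟨a, ⟨ha₁, ha₂⟩, rfl⟩ | ⟨r, ⟨hr₀, hr₁⟩, rfl⟩
  · refine ⟨(a + 4, tau2 w (ℓ + 1) (a + 4)), Or.inl ⟨a + 4, ⟨?_, ?_⟩, rfl⟩, ?_, ?_⟩
    · push_cast; linarith
    · push_cast; linarith
    · dsimp only; linarith
    · have : 0 ≤ 4 * (ℓ : ℝ) - a := by linarith
      have : 0 ≤ 4 - w := by linarith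
      have : √((4 * ℓ - a) * ((4 - w) * ℓ)) ≤ √((4 * ℓ - a) * ((4 - w) * (ℓ + 1))) := by
        gcongr
        linarith
      dsimp only [tau2]
      push_cast
      rw [show 4 * ((ℓ : ℝ) + 1) - (a + 4) = 4 * ℓ - a by ring]
      linarith
  · refine ⟨(area1 w (ℓ + 1) r, tau1 w (ℓ + 1) r), Or.inr ⟨r, ⟨hr₀, hr₁⟩, rfl⟩, ?_, ?_⟩
    · dsimp only [area1]
      push_cast
      nlinarith [mul_nonneg (sub_nonneg.2 hw4) (sub_nonneg.2 (pow_le_one₀ (n := 2) hr₀ hr₁))]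
    · dsimp only [tau1]
      push_cast
      nlinarith [mul_nonneg (sub_nonneg.2 hw4) hr₀]

lemma tauMin_add_le (hw0 : 0 < w) (hw4 : w < 4) (hnd : ∀ n : ℕ, (n : ℝ) ≠ 4 / (4 - w)) {a : ℝ}
    (ha : 0 ≤ a) : tauMin w (a + w) ≤ tauMin w a + 8 := by
  rcases ha.eq_or_lt with rfl | ha
  · have h := mem_tauVals_of_mem_stackGraph hw4 hnd le_rfl
      (Or.inr ⟨1, right_mem_Icc.2 zero_le_one, rfl⟩ : (area1 w 1 1, tau1 w 1 1) ∈ stackGraph w 1)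
    rw [area1_one, tau1_one, Nat.cast_one, one_mul] at h
    rw [tauMin_zero, zero_add]
    linarith [tauMin_le hw0 hw4.le hw0.le h]
  · have key : ∀ t ∈ tauVals w a, tauMin w (a + w) - 8 ≤ t := by
      intro t ht
      obtain ⟨ℓ, hℓ, hat⟩ := exists_mem_stackGraph_of_mem_tauVals ht
      obtain ⟨q, hq, hqa, hqt⟩ := exists_mem_stackGraph_succ hw4.le hat
      have hq₁ : 0 ≤ q.1 := by dsimp only at hqa; linarith
      have := tauMin_monotoneOn hw0 hw4 hnd (show 0 ≤ a + w by linarith) hq₁ hqa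
      have := tauMin_le hw0 hw4.le hq₁ (mem_tauVals_of_mem_stackGraph hw4 hnd (by omega) hq)
      dsimp only at hqt
      linarith
    linarith [le_tauMin hw0 hw4 hnd ha key]

noncomputable def energy (w D δ a : ℝ) : ℝ := tauMin w a + (δ - a) ^ 2 / (2 * D)

lemma energy_zero_le (hw0 : 0 < w) (hw4 : w ≤ 4) {D δ b : ℝ} (hD : 0 ≤ D) (hb : 0 ≤ b)
    (hδb : 2 * δ ≤ b) : energy w D δ 0 ≤ energy w D δ b := by
  have hsq : δ ^ 2 ≤ (δ - b) ^ 2 := by nlinarith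
  have hD2 : 0 ≤ 2 * D := by positivity
  simp only [energy, tauMin_zero, sub_zero, zero_add]
  linarith [tauMin_nonneg hw0 hw4 b, div_le_div_of_nonneg_right hsq hD2]

/-- Only the finitely many stacks with at most `2δ/w + 1` layers compete with `a = 0`, and their
`(area, tension)` points form a compact set. -/
lemma exists_isMinOn_energy (hw0 : 0 < w) (hw4 : w < 4) (hnd : ∀ n : ℕ, (n : ℝ) ≠ 4 / (4 - w))
    {D : ℝ} (hD : 0 ≤ D) (δ : ℝ) : ∃ a, 0 ≤ a ∧ IsMinOn (energy w D δ) (Ici 0) a := by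
  set N := ⌈2 * δ / w⌉₊ + 1
  set K := insert ((0 : ℝ), (0 : ℝ)) (⋃ ℓ ∈ Finset.Icc 1 N, stackGraph w ℓ)
  have hK : IsCompact K :=
    ((Finset.Icc 1 N).isCompact_biUnion fun ℓ _ => isCompact_stackGraph w ℓ).insert _
  set f : ℝ × ℝ → ℝ := fun p => p.2 + (δ - p.1) ^ 2 / (2 * D)
  have hf : Continuous f := by fun_prop
  obtain ⟨p, hpK, hp⟩ := hK.exists_isMinOn (insert_nonempty _ _) hf.continuousOn
  obtain ⟨hp₁, hpτ⟩ : 0 ≤ p.1 ∧ tauMin w p.1 ≤ p.2 := by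
    rcases hpK with rfl | hpK
    · simp [tauMin_zero]
    · simp only [mem_iUnion, Finset.mem_Icc] at hpK
      obtain ⟨ℓ, ⟨hℓ, -⟩, hpℓ⟩ := hpK
      have h₁ : 0 ≤ p.1 := (mul_nonneg (by simp [hℓ]) hw0.le).trans
        (mul_le_of_mem_stackGraph hw0.le hw4.le hℓ hpℓ)
      exact ⟨h₁, tauMin_le hw0 hw4.le h₁ (mem_tauVals_of_mem_stackGraph hw4 hnd hℓ hpℓ)⟩
  have hp₀ : f p ≤ energy w D δ 0 := by simpa [f, energy, tauMin_zero] using hp (mem_insert _ _)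
  refine ⟨p.1, hp₁, fun b (hb : 0 ≤ b) => ?_⟩
  suffices f p ≤ energy w D δ b from
    (show energy w D δ p.1 ≤ f p by simp only [energy, f]; linarith).trans this
  rcases le_or_gt (2 * δ) b with hδb | hbδ
  · exact hp₀.trans (energy_zero_le hw0 hw4.le hD hb hδb)
  rcases hb.eq_or_lt with rfl | hb
  · exact hp₀
  have key : ∀ t ∈ tauVals w b, f p - (δ - b) ^ 2 / (2 * D) ≤ t := fun t ht => by
    obtain ⟨ℓ, hℓ, hbt⟩ := exists_mem_stackGraph_of_mem_tauVals ht
    have hℓN : ℓ ≤ N := (le_ceil_div_add_one_of_mem_stackGraph hw0 hw4.le hℓ hbt).trans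
      (Nat.add_le_add_right (Nat.ceil_mono (div_le_div_of_nonneg_right hbδ.le hw0.le)) 1)
    have := isMinOn_iff.1 hp _
      (mem_insert_of_mem _ (mem_biUnion (Finset.mem_Icc.2 ⟨hℓ, hℓN⟩) hbt))
    simp only [f] at this ⊢
    linarith
  have := le_tauMin hw0 hw4 hnd hb key
  simp only [energy]
  linarith

lemma le_of_isMinOn_energy (hw0 : 0 < w) (hw4 : w < 4) (hnd : ∀ n : ℕ, (n : ℝ) ≠ 4 / (4 - w))
    {D δ a : ℝ} (hD : 0 < D) (hδ : 0 ≤ δ) (ha : 0 ≤ a) (h : IsMinOn (energy w D δ) (Ici 0) a) :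
    a ≤ δ := by
  by_contra! hδa
  have h₁ := isMinOn_iff.1 h δ hδ
  have h₂ := tauMin_monotoneOn hw0 hw4 hnd hδ ha hδa.le
  have h₃ : 0 < (δ - a) ^ 2 / (2 * D) := by
    have : δ - a ≠ 0 := by linarith
    positivity
  simp only [energy, sub_self] at h₁
  linarith [show (0 : ℝ) ^ 2 / (2 * D) = 0 by simp]

lemma sub_le_of_isMinOn_energy (hw0 : 0 < w) (hw4 : w < 4)
    (hnd : ∀ n : ℕ, (n : ℝ) ≠ 4 / (4 - w)) {D δ a : ℝ} (hD : 0 < D) (ha : 0 ≤ a)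
    (h : IsMinOn (energy w D δ) (Ici 0) a) : δ - a ≤ 8 * D / w + w / 2 := by
  have h₁ := isMinOn_iff.1 h (a + w) (show 0 ≤ a + w by linarith)
  have h₂ := tauMin_add_le hw0 hw4 hnd ha
  simp only [energy] at h₁
  have : (δ - a) ^ 2 ≤ (δ - (a + w)) ^ 2 + 16 * D := by
    have h₃ : (δ - a) ^ 2 / (2 * D) ≤ (δ - (a + w)) ^ 2 / (2 * D) + 8 := by linarith
    rwa [div_add' _ _ _ (by positivity), div_le_div_iff_of_pos_right (by positivity),
      show 8 * (2 * D) = 16 * D by ring] at h₃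
  rw [div_add_div _ _ hw0.ne' two_ne_zero, le_div_iff₀ (by positivity)]
  nlinarith

/-- for every `D > 0` there are `δ₀, C < ∞` such that for every `δ > 0`
the functional `E_δ(a) = τ(a) + (δ−a)²/(2D)` attains its minimum over `a ∈ [0, ∞)`,
and for `δ ≥ δ₀` every minimizer `a*` satisfies `0 ≤ δ − a* ≤ C`. -/
theorem minimizer_close_to_delta (w : ℝ) (hw0 : 0 < w) (hw4 : w < 4)
    (hnd : ∀ n : ℕ, (n : ℝ) ≠ 4 / (4 - w)) (D : ℝ) (hD : 0 < D) :
    ∃ δ₀ C : ℝ,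
      (∀ δ : ℝ, 0 < δ → ∃ a : ℝ, 0 ≤ a ∧ ∀ b : ℝ, 0 ≤ b →
        tauMin w a + (δ - a) ^ 2 / (2 * D) ≤ tauMin w b + (δ - b) ^ 2 / (2 * D)) ∧
      (∀ δ : ℝ, δ₀ ≤ δ → ∀ a : ℝ, 0 ≤ a →
        (∀ b : ℝ, 0 ≤ b →
          tauMin w a + (δ - a) ^ 2 / (2 * D) ≤ tauMin w b + (δ - b) ^ 2 / (2 * D)) →
        0 ≤ δ - a ∧ δ - a ≤ C) := by
  refine ⟨0, 8 * D / w + w / 2, fun δ _ => ?_, fun δ hδ a ha hmin => ?_⟩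
  · obtain ⟨a, ha, hmin⟩ := exists_isMinOn_energy hw0 hw4 hnd hD.le δ
    exact ⟨a, ha, isMinOn_iff.1 hmin⟩
  · have hmin : IsMinOn (energy w D δ) (Ici 0) a := isMinOn_iff.2 hmin
    exact ⟨sub_nonneg.2 (le_of_isMinOn_energy hw0 hw4 hnd hD hδ ha hmin),
      sub_le_of_isMinOn_energy hw0 hw4 hnd hD ha hmin⟩
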